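/- The canonical Nambu n-bracket on ℝⁿ, given by the Jacobian determinant of n functions, satisfies the Fundamental Identity: {f₁,…,f_{n-1},{f_n,…,f_{2n-1}}} = Σ_{k=n}^{2n-1} {f_n,…,f_{k-1},{f₁,…,f_{n-1},f_k},f_{k+1},…,f_{2n-1}} for all smooth functions f₁,…,f_{2n-1} on ℝⁿ. -/

import Mathlib

noncomputable section
open scoped Matrix

/-- The canonical Nambu bracket of order `n` on ℝⁿ: the Jacobian determinant. -/
def nambu (n : ℕ) (f : Fin n → ((Fin n → ℝ) → ℝ)) : (Fin n → ℝ) → ℝ :=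
  fun x => Matrix.det (Matrix.of fun i j => fderiv ℝ (f i) x (Pi.single j 1))

open Matrix in
/-- The determinant as a continuous multilinear map in the rows. -/
def D (n : ℕ) : ContinuousMultilinearMap ℝ (fun _ : Fin n => (Fin n → ℝ)) ℝ where
  toMultilinearMap := (Matrix.detRowAlternating (R := ℝ) (n := Fin n)).toMultilinearMap
  cont := Continuous.matrix_det continuous_id

def grad {n : ℕ} (u : (Fin n → ℝ) → ℝ) (x : Fin n → ℝ) : Fin n → ℝ :=
  fun j => fderiv ℝ u x (Pi.single j 1)

lemma nambu_eq {n : ℕ} (f : Fin n → ((Fin n → ℝ) → ℝ)) (x : Fin n → ℝ) :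
    nambu n f x = D n (fun i => grad (f i) x) := rfl

def hess {n : ℕ} (u : (Fin n → ℝ) → ℝ) (x : Fin n → ℝ) (j : Fin n) : Fin n → ℝ :=
  fun l => fderiv ℝ (fderiv ℝ u) x (Pi.single j 1) (Pi.single l 1)

lemma hess_symm {n : ℕ} {u : (Fin n → ℝ) → ℝ} (hu : ContDiff ℝ (⊤ : ℕ∞) u) (x : Fin n → ℝ)
    (j l : Fin n) : hess u x j l = hess u x l j := by
  have h1 : ∀ y, HasFDerivAt u (fderiv ℝ u y) y :=
    fun y => (hu.differentiable (by simp) y).hasFDerivAt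
  have h2 : HasFDerivAt (fderiv ℝ u) (fderiv ℝ (fderiv ℝ u) x) x :=
    ((hu.fderiv_right (m := 1) (WithTop.coe_le_coe.mpr le_top)).differentiable one_ne_zero x).hasFDerivAt
  exact second_derivative_symmetric h1 h2 _ _

lemma grad_nambu {n : ℕ} (u : Fin n → ((Fin n → ℝ) → ℝ)) (hu : ∀ i, ContDiff ℝ (⊤ : ℕ∞) (u i))
    (x : Fin n → ℝ) (j : Fin n) :
    grad (nambu n u) x j
      = ∑ k, D n (Function.update (fun i => grad (u i) x) k (hess (u k) x j)) := by
  have hrow : ∀ i, HasFDerivAt (fun y => grad (u i) y)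
      (ContinuousLinearMap.pi fun l =>
        ((fderiv ℝ (fderiv ℝ (u i)) x).flip (Pi.single l 1))) x := by
    intro i
    apply hasFDerivAt_pi.2
    intro l
    have hc : HasFDerivAt (fderiv ℝ (u i)) (fderiv ℝ (fderiv ℝ (u i)) x) x :=
      (((hu i).fderiv_right (m := 1) (WithTop.coe_le_coe.mpr le_top)).differentiable one_ne_zero x).hasFDerivAt
    have := hc.clm_apply (hasFDerivAt_const (Pi.single l 1) x)
    simp at this
    exact this
  have hΦ : HasFDerivAt (fun y => (fun i => grad (u i) y))
      (ContinuousLinearMap.pi fun i => ContinuousLinearMap.pi fun l =>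
        ((fderiv ℝ (fderiv ℝ (u i)) x).flip (Pi.single l 1))) x :=
    hasFDerivAt_pi.2 hrow
  have hD := ((D n).hasFDerivAt (fun i => grad (u i) x)).comp x hΦ
  have e1 : grad (nambu n u) x j = fderiv ℝ (nambu n u) x (Pi.single j 1) := rfl
  have e2 : nambu n u = fun y => D n (fun i => grad (u i) y) := rfl
  have hD' : HasFDerivAt (nambu n u)
      (((D n).linearDeriv fun i => grad (u i) x).comp
        (ContinuousLinearMap.pi fun i =>
          ContinuousLinearMap.pi fun l => (fderiv ℝ (fderiv ℝ (u i)) x).flip (Pi.single l 1))) x := hD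
  rw [e1, hD'.fderiv]
  simp only [ContinuousMultilinearMap.linearDeriv_apply, ContinuousLinearMap.coe_comp', Function.comp_apply, ContinuousLinearMap.pi_apply, ContinuousLinearMap.flip_apply]
  rfl

lemma D_map_update_sum {n : ℕ} {α : Type*} (t : Finset α) (k : Fin n) (h : α → (Fin n → ℝ))
    (a : Fin n → (Fin n → ℝ)) :
    D n (Function.update a k (∑ c ∈ t, h c)) = ∑ c ∈ t, D n (Function.update a k (h c)) :=
  (D n).toMultilinearMap.map_update_sum t k h a

lemma D_map_update_smul {n : ℕ} (a : Fin n → (Fin n → ℝ)) (k : Fin n) (c : ℝ) (v : Fin n → ℝ) :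
    D n (Function.update a k (c • v)) = c * D n (Function.update a k v) :=
  (D n).toMultilinearMap.map_update_smul a k c v

lemma D_map_update_add {n : ℕ} (a : Fin n → (Fin n → ℝ)) (k : Fin n) (v w : Fin n → ℝ) :
    D n (Function.update a k (v + w))
      = D n (Function.update a k v) + D n (Function.update a k w) :=
  (D n).toMultilinearMap.map_update_add a k v w

lemma single_expand {n : ℕ} (v : Fin n → ℝ) :
    v = ∑ j, v j • (Pi.single j 1 : Fin n → ℝ) := by
  funext l
  simp [Pi.single_apply]

lemma D_update_expand {n : ℕ} (a : Fin n → (Fin n → ℝ)) (k : Fin n) (v : Fin n → ℝ) :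
    D n (Function.update a k v)
      = ∑ j, v j * D n (Function.update a k (Pi.single j 1)) := by
  conv_lhs => rw [single_expand v]
  rw [D_map_update_sum]
  simp [D_map_update_smul]

lemma sum_smul_D_update {n : ℕ} (a : Fin n → (Fin n → ℝ)) (v : Fin n → ℝ) :
    ∑ k, D n (Function.update a k v) • a k = D n a • v := by
  have key := Matrix.mulVec_cramer (Matrix.of a)ᵀ v
  funext j
  have h1 : ∀ k, D n (Function.update a k v) = Matrix.cramer (Matrix.of a)ᵀ v k := by
    intro k
    rw [Matrix.cramer_transpose_apply]
    rfl
  calc (∑ k, D n (Function.update a k v) • a k) j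
      = ∑ k, Matrix.cramer (Matrix.of a)ᵀ v k * a k j := by
        simp [Finset.sum_apply, h1, mul_comm]
    _ = ((Matrix.of a)ᵀ *ᵥ Matrix.cramer (Matrix.of a)ᵀ v) j := by
        simp [Matrix.mulVec, dotProduct, Matrix.transpose_apply, mul_comm]
    _ = (D n a • v) j := by
        rw [key]; simp only [Matrix.det_transpose, Pi.smul_apply, smul_eq_mul]; rfl

variable {m : ℕ}

lemma snoc_as_update (b : Fin (m + 1) → (Fin (m + 2) → ℝ)) (v : Fin (m + 2) → ℝ) :
    Fin.snoc b v = Function.update (Fin.snoc b 0 : Fin (m + 2) → (Fin (m + 2) → ℝ)) (Fin.last (m + 1)) v :=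
  (Fin.update_snoc_last ..).symm

lemma D_snoc_expand (b : Fin (m + 1) → (Fin (m + 2) → ℝ)) (v : Fin (m + 2) → ℝ) :
    D (m + 2) (Fin.snoc b v)
      = ∑ j, v j * D (m + 2) (Fin.snoc b (Pi.single j 1)) := by
  rw [snoc_as_update, D_update_expand]
  simp_rw [← snoc_as_update]

lemma D_snoc_sum {α : Type*} (t : Finset α) (b : Fin (m + 1) → (Fin (m + 2) → ℝ))
    (h : α → (Fin (m + 2) → ℝ)) :
    D (m + 2) (Fin.snoc b (∑ c ∈ t, h c)) = ∑ c ∈ t, D (m + 2) (Fin.snoc b (h c)) := by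
  rw [snoc_as_update, D_map_update_sum]
  simp_rw [← snoc_as_update]

lemma D_snoc_smul (b : Fin (m + 1) → (Fin (m + 2) → ℝ)) (c : ℝ) (v : Fin (m + 2) → ℝ) :
    D (m + 2) (Fin.snoc b (c • v)) = c * D (m + 2) (Fin.snoc b v) := by
  rw [snoc_as_update, D_map_update_smul, ← snoc_as_update]

lemma snocb_as_update (b : Fin (m + 1) → (Fin (m + 2) → ℝ)) (i : Fin (m + 1))
    (v c : Fin (m + 2) → ℝ) :
    Fin.snoc (Function.update b i v) c
      = Function.update (Fin.snoc b c : Fin (m + 2) → (Fin (m + 2) → ℝ)) i.castSucc v :=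
  Fin.snoc_update ..

lemma D_snocb_expand (b : Fin (m + 1) → (Fin (m + 2) → ℝ)) (i : Fin (m + 1))
    (v c : Fin (m + 2) → ℝ) :
    D (m + 2) (Fin.snoc (Function.update b i v) c)
      = ∑ l, v l * D (m + 2) (Fin.snoc (Function.update b i (Pi.single l 1)) c) := by
  rw [snocb_as_update, D_update_expand]
  simp_rw [← snocb_as_update]

lemma D_swap (b : Fin (m + 1) → (Fin (m + 2) → ℝ)) (i : Fin (m + 1))
    (v w : Fin (m + 2) → ℝ) :
    D (m + 2) (Fin.snoc (Function.update b i v) w)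
      = - D (m + 2) (Fin.snoc (Function.update b i w) v) := by
  have hne : i.castSucc ≠ Fin.last (m + 1) := (Fin.castSucc_lt_last i).ne
  have hsw : (Fin.snoc (Function.update b i w) v) ∘ Equiv.swap i.castSucc (Fin.last (m + 1))
      = Fin.snoc (Function.update b i v) w := by
    funext t
    rcases eq_or_ne t i.castSucc with rfl | ht1
    · simp [Equiv.swap_apply_left, Function.comp]
    · rcases eq_or_ne t (Fin.last (m + 1)) with rfl | ht2
      · simp [Equiv.swap_apply_right, Function.comp, hne]
      · obtain ⟨s, rfl⟩ := Fin.exists_castSucc_eq.2 ht2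
        have hsi : s ≠ i := fun h => ht1 (by rw [h])
        simp [Function.comp, Equiv.swap_apply_of_ne_of_ne ht1 ht2, hsi]
  have := Matrix.detRowAlternating.map_swap
    (v := Fin.snoc (Function.update b i w) v) (i := i.castSucc) (j := Fin.last (m + 1)) hne
  rw [hsw] at this
  exact this.trans rfl

lemma claim1 (a : Fin (m + 2) → (Fin (m + 2) → ℝ)) (b : Fin (m + 1) → (Fin (m + 2) → ℝ))
    (k : Fin (m + 2)) (F : Fin (m + 2) → (Fin (m + 2) → ℝ)) (hF : ∀ j l, F j l = F l j) :
    D (m + 2) (Fin.snoc b (fun j => D (m + 2) (Function.update a k (F j))))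
      = D (m + 2) (Function.update a k (fun j => D (m + 2) (Fin.snoc b (F j)))) := by
  rw [D_snoc_expand, D_update_expand a k (fun j => D (m + 2) (Fin.snoc b (F j)))]
  calc ∑ j, D (m + 2) (Function.update a k (F j)) * D (m + 2) (Fin.snoc b (Pi.single j 1))
      = ∑ j, ∑ l, F j l * D (m + 2) (Function.update a k (Pi.single l 1))
          * D (m + 2) (Fin.snoc b (Pi.single j 1)) := by
        refine Finset.sum_congr rfl fun j _ => ?_
        rw [D_update_expand, Finset.sum_mul]
    _ = ∑ l, ∑ j, F j l * D (m + 2) (Function.update a k (Pi.single l 1))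
          * D (m + 2) (Fin.snoc b (Pi.single j 1)) := Finset.sum_comm
    _ = ∑ j, D (m + 2) (Fin.snoc b (F j)) * D (m + 2) (Function.update a k (Pi.single j 1)) := by
        refine Finset.sum_congr rfl fun j _ => ?_
        rw [D_snoc_expand (b := b) (v := F j), Finset.sum_mul]
        refine Finset.sum_congr rfl fun l _ => ?_
        rw [hF l j]
        ring

lemma claim2 (a : Fin (m + 2) → (Fin (m + 2) → ℝ)) (b : Fin (m + 1) → (Fin (m + 2) → ℝ))
    (i : Fin (m + 1)) (G : Fin (m + 2) → (Fin (m + 2) → ℝ)) (hG : ∀ j l, G j l = G l j) :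
    ∑ k, D (m + 2) (Function.update a k
        (fun j => D (m + 2) (Fin.snoc (Function.update b i (G j)) (a k)))) = 0 := by
  have step1 : ∀ k, D (m + 2) (Function.update a k
        (fun j => D (m + 2) (Fin.snoc (Function.update b i (G j)) (a k))))
      = ∑ j, ∑ l, G j l * (D (m + 2) (Fin.snoc (Function.update b i (Pi.single l 1)) (a k))
          * D (m + 2) (Function.update a k (Pi.single j 1))) := by
    intro k
    rw [D_update_expand]
    refine Finset.sum_congr rfl fun j _ => ?_
    rw [D_snocb_expand, Finset.sum_mul]
    refine Finset.sum_congr rfl fun l _ => ?_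
    ring
  simp_rw [step1]
  rw [Finset.sum_comm]
  have step2 : ∀ j, ∑ k, ∑ l, G j l
        * (D (m + 2) (Fin.snoc (Function.update b i (Pi.single l 1)) (a k))
          * D (m + 2) (Function.update a k (Pi.single j 1)))
      = ∑ l, G j l * (D (m + 2) a
          * D (m + 2) (Fin.snoc (Function.update b i (Pi.single l 1)) (Pi.single j 1))) := by
    intro j
    rw [Finset.sum_comm]
    refine Finset.sum_congr rfl fun l _ => ?_
    rw [← Finset.mul_sum]
    congr 1
    have lin : ∑ k, D (m + 2) (Fin.snoc (Function.update b i (Pi.single l 1)) (a k))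
          * D (m + 2) (Function.update a k (Pi.single j 1))
        = D (m + 2) (Fin.snoc (Function.update b i (Pi.single l 1))
            (∑ k, D (m + 2) (Function.update a k (Pi.single j 1)) • a k)) := by
      rw [D_snoc_sum]
      refine Finset.sum_congr rfl fun k _ => ?_
      rw [D_snoc_smul]
      ring
    rw [lin, sum_smul_D_update, D_snoc_smul]
  simp_rw [step2]
  -- now ∑ j ∑ l G j l * (Da * T l j) = 0 with T antisymmetric
  have hT : ∀ j l, D (m + 2) (Fin.snoc (Function.update b i (Pi.single l 1)) (Pi.single j 1))
      = - D (m + 2) (Fin.snoc (Function.update b i (Pi.single j 1)) (Pi.single l 1)) :=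
    fun j l => D_swap b i (Pi.single l 1) (Pi.single j 1)
  set T : Fin (m + 2) → Fin (m + 2) → ℝ := fun l j =>
    D (m + 2) (Fin.snoc (Function.update b i (Pi.single l 1)) (Pi.single j 1)) with hTdef
  have hS : (∑ j, ∑ l, G j l * (D (m + 2) a * T l j))
      = - ∑ j, ∑ l, G j l * (D (m + 2) a * T l j) := by
    conv_lhs => rw [Finset.sum_comm]
    rw [← Finset.sum_neg_distrib]
    refine Finset.sum_congr rfl fun l _ => ?_
    rw [← Finset.sum_neg_distrib]
    refine Finset.sum_congr rfl fun j _ => ?_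
    rw [hG l j, show T l j = - T j l from hT j l]
    ring
  linarith [hS]


/-- The Fundamental Identity for the canonical Nambu bracket on ℝⁿ (here `n = m + 2 ≥ 2`):
`{g₁,…,g_{n-1},{f₁,…,f_n}} = Σ_k {f₁,…,f_{k-1},{g₁,…,g_{n-1},f_k},f_{k+1},…,f_n}`. -/
theorem nambu_fundamental_identity (m : ℕ)
    (g : Fin (m + 1) → ((Fin (m + 2) → ℝ) → ℝ))
    (f : Fin (m + 2) → ((Fin (m + 2) → ℝ) → ℝ))
    (hg : ∀ i, ContDiff ℝ (⊤ : ℕ∞) (g i)) (hf : ∀ i, ContDiff ℝ (⊤ : ℕ∞) (f i))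
    (x : Fin (m + 2) → ℝ) :
    nambu (m + 2) (Fin.snoc g (nambu (m + 2) f)) x
      = ∑ k : Fin (m + 2),
          nambu (m + 2) (Function.update f k (nambu (m + 2) (Fin.snoc g (f k)))) x := by
  have hFsym : ∀ k j l, hess (f k) x j l = hess (f k) x l j := fun k => hess_symm (hf k) x
  have hGsym : ∀ i j l, hess (g i) x j l = hess (g i) x l j := fun i => hess_symm (hg i) x
  -- LHS
  have hL1 : nambu (m + 2) (Fin.snoc g (nambu (m + 2) f)) x
      = D (m + 2) (Fin.snoc (fun i => grad (g i) x) (grad (nambu (m + 2) f) x)) := by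
    rw [nambu_eq]
    congr 1
    funext i
    refine Fin.lastCases ?_ (fun s => ?_) i <;> simp
  have hgradN : grad (nambu (m + 2) f) x
      = fun j => ∑ k, D (m + 2) (Function.update (fun i => grad (f i) x) k (hess (f k) x j)) := by
    funext j; exact grad_nambu f hf x j
  have hL2 : D (m + 2) (Fin.snoc (fun i => grad (g i) x) (grad (nambu (m + 2) f) x))
      = ∑ k, D (m + 2) (Fin.snoc (fun i => grad (g i) x)
          (fun j => D (m + 2) (Function.update (fun i => grad (f i) x) k (hess (f k) x j)))) := by
    rw [hgradN]
    rw [show (fun j => ∑ k, D (m + 2) (Function.update (fun i => grad (f i) x) k (hess (f k) x j)))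
        = ∑ k, (fun j => D (m + 2) (Function.update (fun i => grad (f i) x) k (hess (f k) x j)))
        from by funext j; simp]
    exact D_snoc_sum ..
  have hL3 : ∀ k, D (m + 2) (Fin.snoc (fun i => grad (g i) x)
          (fun j => D (m + 2) (Function.update (fun i => grad (f i) x) k (hess (f k) x j))))
      = D (m + 2) (Function.update (fun i => grad (f i) x) k
          (fun j => D (m + 2) (Fin.snoc (fun i => grad (g i) x) (hess (f k) x j)))) :=
    fun k => claim1 _ _ k _ (hFsym k)
  -- RHS
  have hR1 : ∀ k, nambu (m + 2) (Function.update f k (nambu (m + 2) (Fin.snoc g (f k)))) x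
      = D (m + 2) (Function.update (fun i => grad (f i) x) k
          (grad (nambu (m + 2) (Fin.snoc g (f k))) x)) := by
    intro k
    rw [nambu_eq]
    congr 1
    funext i
    rcases eq_or_ne i k with rfl | h
    · simp
    · simp [Function.update_of_ne h]
  have hcd : ∀ (k : Fin (m + 2)) (i : Fin (m + 2)), ContDiff ℝ (⊤ : ℕ∞) (Fin.snoc (α := fun _ => (Fin (m + 2) → ℝ) → ℝ) g (f k) i) := by
    intro k i
    refine Fin.lastCases ?_ (fun s => ?_) i
    · simpa using hf k
    · simpa using hg s
  have hrows : ∀ k : Fin (m + 2), (fun i : Fin (m + 2) => grad (Fin.snoc (α := fun _ => (Fin (m + 2) → ℝ) → ℝ) g (f k) i) x)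
      = Fin.snoc (fun i => grad (g i) x) (grad (f k) x) := by
    intro k; funext i
    refine Fin.lastCases ?_ (fun s => ?_) i <;> simp
  have hgradk : ∀ k, grad (nambu (m + 2) (Fin.snoc g (f k))) x
      = (fun j => ∑ s : Fin (m + 1), D (m + 2)
            (Fin.snoc (Function.update (fun i => grad (g i) x) s (hess (g s) x j))
              (grad (f k) x)))
        + (fun j => D (m + 2) (Fin.snoc (fun i => grad (g i) x) (hess (f k) x j))) := by
    intro k
    funext j
    rw [show grad (nambu (m + 2) (Fin.snoc g (f k))) x j = _ from grad_nambu (Fin.snoc g (f k)) (hcd k) x j]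
    rw [hrows k, Fin.sum_univ_castSucc]
    simp only [Pi.add_apply]
    congr 1
    · refine Finset.sum_congr rfl fun s _ => ?_
      rw [← snocb_as_update]
      simp only [Fin.snoc_castSucc]
    · rw [Fin.update_snoc_last]
      simp only [Fin.snoc_last]
  have hR2 : ∀ k, D (m + 2) (Function.update (fun i => grad (f i) x) k
          (grad (nambu (m + 2) (Fin.snoc g (f k))) x))
      = D (m + 2) (Function.update (fun i => grad (f i) x) k
          (fun j => ∑ s : Fin (m + 1), D (m + 2)
            (Fin.snoc (Function.update (fun i => grad (g i) x) s (hess (g s) x j))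
              (grad (f k) x))))
        + D (m + 2) (Function.update (fun i => grad (f i) x) k
          (fun j => D (m + 2) (Fin.snoc (fun i => grad (g i) x) (hess (f k) x j)))) := by
    intro k
    rw [hgradk k, D_map_update_add]
  have hR3 : ∀ k, D (m + 2) (Function.update (fun i => grad (f i) x) k
          (fun j => ∑ s : Fin (m + 1), D (m + 2)
            (Fin.snoc (Function.update (fun i => grad (g i) x) s (hess (g s) x j))
              (grad (f k) x))))
      = ∑ s : Fin (m + 1), D (m + 2) (Function.update (fun i => grad (f i) x) k
          (fun j => D (m + 2)
            (Fin.snoc (Function.update (fun i => grad (g i) x) s (hess (g s) x j))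
              (grad (f k) x)))) := by
    intro k
    rw [show (fun j => ∑ s : Fin (m + 1), D (m + 2)
            (Fin.snoc (Function.update (fun i => grad (g i) x) s (hess (g s) x j))
              (grad (f k) x)))
        = ∑ s : Fin (m + 1), (fun j => D (m + 2)
            (Fin.snoc (Function.update (fun i => grad (g i) x) s (hess (g s) x j))
              (grad (f k) x)))
        from by funext j; simp]
    exact D_map_update_sum ..
  have hzero : ∑ k, ∑ s : Fin (m + 1), D (m + 2) (Function.update (fun i => grad (f i) x) k
          (fun j => D (m + 2)
            (Fin.snoc (Function.update (fun i => grad (g i) x) s (hess (g s) x j))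
              (grad (f k) x)))) = 0 := by
    rw [Finset.sum_comm]
    refine Finset.sum_eq_zero fun s _ => ?_
    exact claim2 (fun i => grad (f i) x) (fun i => grad (g i) x) s
      (fun j => hess (g s) x j) (hGsym s)
  have final : ∑ k : Fin (m + 2),
        nambu (m + 2) (Function.update f k (nambu (m + 2) (Fin.snoc g (f k)))) x
      = (∑ k, ∑ s : Fin (m + 1), D (m + 2) (Function.update (fun i => grad (f i) x) k
          (fun j => D (m + 2)
            (Fin.snoc (Function.update (fun i => grad (g i) x) s (hess (g s) x j))
              (grad (f k) x)))))
        + ∑ k, D (m + 2) (Function.update (fun i => grad (f i) x) k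
            (fun j => D (m + 2) (Fin.snoc (fun i => grad (g i) x) (hess (f k) x j)))) := by
    rw [← Finset.sum_add_distrib]
    refine Finset.sum_congr rfl fun k _ => ?_
    rw [hR1 k, hR2 k, hR3 k]
  rw [final, hzero, zero_add, hL1, hL2]
  exact Finset.sum_congr rfl fun k _ => hL3 k
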